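/- arXiv:1306.5483 — 2 statements merged into one kernel-verified Lean document; each statement's English description precedes it below -/
import Mathlib

section
/- For every n ≥ 4, every automorphism of the Möbius ladder Mₙ maps each rung to a rung: if σ is an automorphism of Mₙ, then for every vertex i ∈ ZMod (2n) one has σ(i + n) = σ(i) + n. (Equivalently, every automorphism of Mₙ leaves the 2n-gon formed by the edges joining i to i+1 setwise invariant.) -/
/-- The automorphism group of a simple graph, as the subgroup of the
permutation group of its vertices consisting of adjacency-preserving permutations. -/
def SimpleGraph.autSubgroup {V : Type*} (G : SimpleGraph V) : Subgroup (Equiv.Perm V) where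
  carrier := {σ | ∀ a b : V, G.Adj (σ a) (σ b) ↔ G.Adj a b}
  one_mem' := by intro a b; simp
  mul_mem' := by
    intro σ τ hσ hτ a b
    simpa [Equiv.Perm.mul_apply] using (hσ (τ a) (τ b)).trans (hτ a b)
  inv_mem' := by
    intro σ hσ a b
    simpa using (hσ (σ⁻¹ a) (σ⁻¹ b)).symm

/-- The Möbius ladder with `n` rungs: vertices are `ZMod (2 * n)`, with distinct
vertices `i` and `j` adjacent iff `j - i ∈ {1, -1, n}`. -/
def mobiusLadder (n : ℕ) : SimpleGraph (ZMod (2 * n)) where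
  Adj i j := i ≠ j ∧ (j - i = 1 ∨ j - i = -1 ∨ j - i = (n : ZMod (2 * n)))
  symm := by
    constructor
    intro i j ⟨hne, h⟩
    have hn : -(n : ZMod (2 * n)) = (n : ZMod (2 * n)) := by
      have h2 : ((n : ZMod (2 * n)) + n) = ((2 * n : ℕ) : ZMod (2 * n)) := by
        push_cast; ring
      have h0 : ((n : ZMod (2 * n)) + n) = 0 := by rw [h2, ZMod.natCast_self]
      exact neg_eq_of_add_eq_zero_left h0
    refine ⟨hne.symm, ?_⟩
    have hij : i - j = -(j - i) := by ring
    rcases h with h | h | h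
    · right; left; rw [hij, h]
    · left; rw [hij, h]; ring
    · right; right; rw [hij, h, hn]
  loopless := ⟨fun i h => h.1 rfl⟩
/-!
A rung `{i, i + n}` lies on the two 4-cycles `i, i + ε, i + ε + n, i + n` (`ε = ±1`), whereas
for `n ≥ 4` the only 4-cycle through a cycle edge `{a, a + 1}` is `a, a + n, a + 1 + n, a + 1`.
An automorphism maps 4-cycles to 4-cycles, so it cannot send a rung to a cycle edge.
Vertices are compared by writing them as `a + s` with integer steps `s`, which turns every
identity in `ZMod (2 * n)` into linear arithmetic over `ℤ`.
-/

lemma Int.dvd_iff_eq_neg_or_eq_zero_or_eq {m x : ℤ} (hx : |x| < 2 * m) :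
    m ∣ x ↔ x = -m ∨ x = 0 ∨ x = m := by
  constructor
  · rintro ⟨k, rfl⟩
    have hm : 0 < m := by linarith [abs_nonneg (m * k)]
    have hk : |k| < 2 := by
      rw [abs_mul, abs_of_pos hm] at hx
      nlinarith
    rw [abs_lt] at hk
    obtain rfl | rfl | rfl : k = -1 ∨ k = 0 ∨ k = 1 := by omega
    all_goals simp
  · rintro (rfl | rfl | rfl) <;> simp

lemma ZMod.intCast_eq_intCast_iff_of_abs_lt {m : ℕ} {x y : ℤ} (h : |y - x| < 2 * m) :
    (x : ZMod m) = y ↔ y - x = -m ∨ y - x = 0 ∨ y - x = m := by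
  rw [ZMod.intCast_eq_intCast_iff_dvd_sub, Int.dvd_iff_eq_neg_or_eq_zero_or_eq h]

lemma ZMod.add_intCast_ne_add_intCast {m : ℕ} (x : ZMod m) {j k : ℤ} (hjk : j ≠ k)
    (h : |k - j| < m) : x + j ≠ x + k := by
  rw [Ne, add_right_inj, ZMod.intCast_eq_intCast_iff_dvd_sub]
  exact fun hdvd => sub_ne_zero.2 hjk.symm (Int.eq_zero_of_abs_lt_dvd hdvd h)

namespace mobiusLadder

variable {n : ℕ}

lemma adj_iff_exists_int (hn : n ≠ 0) {a c : ZMod (2 * n)} :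
    (mobiusLadder n).Adj a c ↔ ∃ s : ℤ, (s = 1 ∨ s = -1 ∨ s = n) ∧ c = a + s := by
  constructor
  · intro h
    rcases h.2 with h | h | h
    · exact ⟨1, by simp, by push_cast; exact eq_add_of_sub_eq' h⟩
    · exact ⟨-1, by simp, by push_cast; exact eq_add_of_sub_eq' h⟩
    · exact ⟨n, by simp, by push_cast; exact eq_add_of_sub_eq' h⟩
  · rintro ⟨s, hs, rfl⟩
    refine ⟨?_, ?_⟩
    · simpa using a.add_intCast_ne_add_intCast (j := 0) (k := s) (by omega)
        (by rw [abs_lt]; push_cast; omega)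
    · rcases hs with rfl | rfl | rfl <;> simp

lemma eq_add_of_adj_of_adj_of_adj (hn : 4 ≤ n) {a c d : ZMod (2 * n)}
    (h₁ : (mobiusLadder n).Adj a c) (h₂ : (mobiusLadder n).Adj c d)
    (h₃ : (mobiusLadder n).Adj d (a + 1)) (hc : c ≠ a + 1) (hd : d ≠ a) :
    c = a + n ∧ d = a + 1 + n := by
  obtain ⟨s₁, hs₁, rfl⟩ := (adj_iff_exists_int (by omega)).1 h₁
  obtain ⟨s₂, hs₂, rfl⟩ := (adj_iff_exists_int (by omega)).1 h₂
  obtain ⟨s₃, hs₃, h⟩ := (adj_iff_exists_int (by omega)).1 h₃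
  have hc' : ¬((s₁ : ℤ) : ZMod (2 * n)) = ((1 : ℤ) : ZMod (2 * n)) := by
    push_cast; simpa using hc
  have hd' : ¬((0 : ℤ) : ZMod (2 * n)) = ((s₁ + s₂ : ℤ) : ZMod (2 * n)) := by
    push_cast; simpa [add_assoc, eq_comm] using hd
  have h' : ((1 : ℤ) : ZMod (2 * n)) = ((s₁ + s₂ + s₃ : ℤ) : ZMod (2 * n)) := by
    push_cast; simpa [add_assoc] using h
  rw [ZMod.intCast_eq_intCast_iff_of_abs_lt (by rw [abs_lt]; push_cast; omega)] at hc' hd' h'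
  obtain ⟨rfl, rfl⟩ : s₁ = n ∧ s₂ = 1 := by omega
  constructor <;> push_cast <;> ring

lemma eq_add_of_square (hn : 4 ≤ n) {a b c d : ZMod (2 * n)} (hab : b = a + 1 ∨ a = b + 1)
    (h₁ : (mobiusLadder n).Adj a c) (h₂ : (mobiusLadder n).Adj c d)
    (h₃ : (mobiusLadder n).Adj d b) (hc : c ≠ b) (hd : d ≠ a) : c = a + n := by
  rcases hab with rfl | rfl
  · exact (eq_add_of_adj_of_adj_of_adj hn h₁ h₂ h₃ hc hd).1
  · exact (eq_add_of_adj_of_adj_of_adj hn h₃.symm h₂.symm h₁.symm hd hc).2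

end mobiusLadder

/-- For `n ≥ 4`, every automorphism of the Möbius ladder `Mₙ` takes rungs to
rungs: it commutes with the antipodal map `i ↦ i + n`. -/
theorem mobiusLadder_aut_maps_rungs_to_rungs (n : ℕ) (hn : 4 ≤ n)
    (σ : Equiv.Perm (ZMod (2 * n))) (hσ : σ ∈ (mobiusLadder n).autSubgroup)
    (i : ZMod (2 * n)) :
    σ (i + (n : ZMod (2 * n))) = σ i + (n : ZMod (2 * n)) := by
  have hn₀ : n ≠ 0 := by omega
  have hne {j k : ℤ} (hjk : j ≠ k) (h : |k - j| < 2 * n) : σ (i + j) ≠ σ (i + k) :=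
    σ.injective.ne (i.add_intCast_ne_add_intCast hjk (by exact_mod_cast h))
  have hstep (x : ZMod (2 * n)) {s : ℤ} (hs : s = 1 ∨ s = -1 ∨ s = n) :
      (mobiusLadder n).Adj (σ x) (σ (x + s)) :=
    (hσ _ _).2 ((mobiusLadder.adj_iff_exists_int hn₀).2 ⟨s, hs, rfl⟩)
  obtain ⟨s, hs, hσs⟩ := (mobiusLadder.adj_iff_exists_int hn₀).1 (hstep i (s := n) (by simp))
  obtain rfl | hs : s = n ∨ (s = 1 ∨ s = -1) := by tauto
  · simpa using hσs
  have hab : σ (i + (n : ℤ)) = σ i + 1 ∨ σ i = σ (i + (n : ℤ)) + 1 := by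
    rcases hs with rfl | rfl
    · left; simpa using hσs
    · right; rw [hσs]; push_cast; ring
  have hsquare {ε : ℤ} (hε : ε = 1 ∨ ε = -1) : σ (i + ε) = σ i + n := by
    refine mobiusLadder.eq_add_of_square hn hab (hstep i (by omega))
      (hstep (i + ε) (s := n) (by simp)) ?_ (hne (by omega) (by rw [abs_lt]; omega)) ?_
    · convert hstep (i + ε + (n : ℤ)) (s := -ε) (by omega) using 2
      push_cast; ring
    · simpa [add_assoc] using hne (j := ε + n) (k := 0) (by omega) (by rw [abs_lt]; omega)
  exact absurd ((hsquare (by simp)).trans (hsquare (by simp)).symm)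
    (hne (j := 1) (k := -1) (by omega) (by rw [abs_lt]; omega))
end

section
/- For every n ≥ 4, the automorphism group of the Möbius ladder Mₙ is isomorphic to the dihedral group of order 4n (the dihedral group D_{2n} with 2n rotations and 2n reflections). -/
/-!
An automorphism must send the Hamiltonian cycle `0, 1, …, 2n - 1` to itself: for `n ≥ 4` a rung
`{a, a + n}` lies on two 4-cycles, through `a + 1` and through `a - 1`, whereas every cycle edge
`{a, a + 1}` lies on only one, through the rung at `a`. Hence an automorphism `σ` moves by `±1`
along each cycle edge, and injectivity forces the same sign everywhere, so `σ` is `x ↦ σ 0 ± x`.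
These maps are exactly the image of the faithful action of `DihedralGroup (2 * n)` on `ZMod (2 * n)`.
-/

namespace ZMod

lemma intCast_ne_zero_of_pos_of_lt {m : ℕ} {z : ℤ} (hpos : 0 < z) (hlt : z < m) :
    (z : ZMod m) ≠ 0 := fun h =>
  hpos.ne' (Int.eq_zero_of_abs_lt_dvd ((intCast_zmod_eq_zero_iff_dvd z m).1 h)
    (by rwa [abs_of_pos hpos]))

lemma two_ne_zero_of_lt {m : ℕ} (hm : 2 < m) : (2 : ZMod m) ≠ 0 := by
  exact_mod_cast intCast_ne_zero_of_pos_of_lt (m := m) (z := 2) two_pos (by omega)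

lemma apply_eq_apply_zero_of_periodic_one {m : ℕ} {α : Type*} {f : ZMod m → α}
    (hf : Function.Periodic f 1) (x : ZMod m) : f x = f 0 := by
  obtain ⟨k, rfl⟩ := intCast_surjective x
  simpa using hf.int_mul_eq k

lemma eq_add_mul_of_sub_eq {m : ℕ} {f : ZMod m → ZMod m} {e : ZMod m}
    (hf : ∀ i, f (i + 1) - f i = e) (x : ZMod m) : f x = f 0 + e * x := by
  have hper : Function.Periodic (fun x => f x - e * x) 1 := fun x => by
    linear_combination hf x
  linear_combination apply_eq_apply_zero_of_periodic_one hper x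

theorem eq_add_or_eq_sub_of_injective {m : ℕ} (h2 : (2 : ZMod m) ≠ 0) {f : ZMod m → ZMod m}
    (hf : Function.Injective f) (hstep : ∀ i, f (i + 1) - f i = 1 ∨ f (i + 1) - f i = -1) :
    (∀ x, f x = f 0 + x) ∨ (∀ x, f x = f 0 - x) := by
  -- Steps of opposite signs at `i` and `i + 1` would give `f (i + 2) = f i`.
  have hper : Function.Periodic (fun i => f (i + 1) - f i) 1 := fun i => by
    have not_back : f (i + 1 + 1) ≠ f i := fun h => h2 (by linear_combination hf h)
    rcases hstep i with h | h <;> rcases hstep (i + 1) with h' | h'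
    · exact h'.trans h.symm
    · exact absurd (by linear_combination h + h') not_back
    · exact absurd (by linear_combination h + h') not_back
    · exact h'.trans h.symm
  have hconst (i : ZMod m) : f (i + 1) - f i = f (0 + 1) - f 0 :=
    apply_eq_apply_zero_of_periodic_one hper i
  rw [zero_add] at hconst
  rcases hstep 0 with h | h <;> rw [zero_add] at h <;> rw [h] at hconst
  · exact .inl fun x => by simpa using eq_add_mul_of_sub_eq hconst x
  · exact .inr fun x => by simpa [sub_eq_add_neg] using eq_add_mul_of_sub_eq hconst x

end ZMod

namespace DihedralGroup

variable {m : ℕ}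

/-- The signs `x - i` and `i - x` are the ones compatible with Mathlib's conventions
`r i * sr j = sr (j - i)` and `sr i * r j = sr (i + j)`. -/
def toPerm (m : ℕ) : DihedralGroup m →* Equiv.Perm (ZMod m) where
  toFun
    | r i => Equiv.subRight i
    | sr i => Equiv.subLeft i
  map_one' := by ext x; rw [one_def]; exact sub_zero x
  map_mul' := by
    rintro (i | i) (j | j) <;> ext x <;>
      simp only [r_mul_r, r_mul_sr, sr_mul_r, sr_mul_sr, Equiv.Perm.mul_apply,
        Equiv.subRight_apply, Equiv.subLeft_apply] <;> ring

@[simp] lemma toPerm_r (i x : ZMod m) : toPerm m (r i) x = x - i := rfl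

@[simp] lemma toPerm_sr (i x : ZMod m) : toPerm m (sr i) x = i - x := rfl

lemma toPerm_injective (h2 : (2 : ZMod m) ≠ 0) : Function.Injective (toPerm m) := by
  intro g g' h
  have h0 := DFunLike.congr_fun h 0
  have h1 := DFunLike.congr_fun h 1
  rcases g with i | i <;> rcases g' with j | j <;> simp only [toPerm_r, toPerm_sr] at h0 h1
  · exact congrArg r (by linear_combination -h0)
  · exact absurd (by linear_combination h1 - h0) h2
  · exact absurd (by linear_combination h0 - h1) h2
  · exact congrArg sr (by linear_combination h0)

end DihedralGroup

namespace SimpleGraph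

variable {V W : Type*} {G : SimpleGraph V} {H : SimpleGraph W}

/-- When `G.Adj a b`, this is a 4-cycle `a, c, d, b` through the edge `{a, b}`. -/
def ThreePathVia (G : SimpleGraph V) (a b c : V) : Prop :=
  c ≠ b ∧ G.Adj a c ∧ ∃ d, d ≠ a ∧ G.Adj c d ∧ G.Adj d b

lemma ThreePathVia.map (f : G ↪g H) {a b c : V} (h : G.ThreePathVia a b c) :
    H.ThreePathVia (f a) (f b) (f c) := by
  obtain ⟨hcb, hac, d, hda, hcd, hdb⟩ := h
  exact ⟨f.injective.ne hcb, f.map_adj_iff.2 hac, f d, f.injective.ne hda,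
    f.map_adj_iff.2 hcd, f.map_adj_iff.2 hdb⟩

end SimpleGraph

namespace mobiusLadder

open SimpleGraph ZMod

variable {n : ℕ}

lemma adj_congr {a b a' b' : ZMod (2 * n)} (h : b' - a' = b - a) :
    (mobiusLadder n).Adj a' b' ↔ (mobiusLadder n).Adj a b := by
  change (a' ≠ b' ∧ _) ↔ (a ≠ b ∧ _)
  rw [ne_comm, ← sub_ne_zero, h, sub_ne_zero, ne_comm]

lemma adj_iff (hn : 0 < n) {a b : ZMod (2 * n)} :
    (mobiusLadder n).Adj a b ↔ b - a = 1 ∨ b - a = -1 ∨ b - a = n := by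
  refine ⟨And.right, fun h => ⟨fun hab => ?_, h⟩⟩
  rw [hab, sub_self] at h
  have h1 : ((1 : ℤ) : ZMod (2 * n)) ≠ 0 := intCast_ne_zero_of_pos_of_lt one_pos (by omega)
  have hn' : ((n : ℤ) : ZMod (2 * n)) ≠ 0 := intCast_ne_zero_of_pos_of_lt (by omega) (by omega)
  push_cast at h1 hn'
  rcases h with h | h | h
  · exact h1 h.symm
  · exact h1 (by linear_combination h)
  · exact hn' h.symm

lemma toPerm_mem_autSubgroup (g : DihedralGroup (2 * n)) :
    DihedralGroup.toPerm (2 * n) g ∈ (mobiusLadder n).autSubgroup := by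
  intro a b
  rcases g with i | i
  · exact adj_congr (by simp)
  · rw [adj_comm]; exact adj_congr (by simp)

lemma threePathVia_of_sub_eq (hn : 2 ≤ n) {a b : ZMod (2 * n)} (h : b - a = n) :
    (mobiusLadder n).ThreePathVia a b (a + 1) ∧ (mobiusLadder n).ThreePathVia a b (a - 1) := by
  have hsub : ((n - 1 : ℤ) : ZMod (2 * n)) ≠ 0 := intCast_ne_zero_of_pos_of_lt (by omega) (by omega)
  have hadd : ((n + 1 : ℤ) : ZMod (2 * n)) ≠ 0 := intCast_ne_zero_of_pos_of_lt (by omega) (by omega)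
  push_cast at hsub hadd
  simp only [ThreePathVia, adj_iff (by omega : 0 < n)]
  refine ⟨⟨fun he => hsub ?_, ?_, a + 1 + n, fun he => hadd ?_, ?_, ?_⟩,
    ⟨fun he => hadd ?_, ?_, a - 1 + n, fun he => hsub ?_, ?_, ?_⟩⟩
  · linear_combination -h - he
  · left; ring
  · linear_combination he
  · right; right; ring
  · right; left; linear_combination h
  · linear_combination -h - he
  · right; left; ring
  · linear_combination he
  · right; right; ring
  · left; linear_combination h

lemma threePathVia_add_one (hn : 4 ≤ n) {a c : ZMod (2 * n)}
    (h : (mobiusLadder n).ThreePathVia a (a + 1) c) : c = a + n := by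
  obtain ⟨hcb, hac, d, hda, hcd, hdb⟩ := h
  rw [adj_iff (by omega)] at hac hcd hdb
  have hne (z : ℤ) (hpos : 0 < z) (hlt : z < 2 * n) : (z : ZMod (2 * n)) ≠ 0 :=
    intCast_ne_zero_of_pos_of_lt hpos (by omega)
  rcases hac with hc | hc | hc
  · exact absurd (by linear_combination hc) hcb
  · -- `c = a - 1`: then `2 = (a + 1 - d) + (d - c)` is a sum of two elements of `{1, -1, n}`.
    exfalso
    have hsum : (2 : ZMod (2 * n)) = (a + 1 - d) + (d - c) := by linear_combination hc
    rcases hdb with hd | hd | hd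
    · exact hda (by linear_combination -hd)
    all_goals rcases hcd with h | h | h <;> rw [hd, h] at hsum
    · exact hne 2 (by norm_num) (by omega) (by push_cast; linear_combination hsum)
    · exact hne 4 (by norm_num) (by omega) (by push_cast; linear_combination hsum)
    · exact hne (n - 3) (by omega) (by omega) (by push_cast; linear_combination -hsum)
    · exact hne (n - 1) (by omega) (by omega) (by push_cast; linear_combination -hsum)
    · exact hne (n - 3) (by omega) (by omega) (by push_cast; linear_combination -hsum)
    · exact hne (2 * n - 2) (by omega) (by omega) (by push_cast; linear_combination -hsum)
  · linear_combination hc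

lemma sub_eq_one_or_neg_one_of_mem_autSubgroup (hn : 4 ≤ n) {σ : Equiv.Perm (ZMod (2 * n))}
    (hσ : σ ∈ (mobiusLadder n).autSubgroup) (i : ZMod (2 * n)) :
    σ (i + 1) - σ i = 1 ∨ σ (i + 1) - σ i = -1 := by
  have hadj : (mobiusLadder n).Adj (σ i) (σ (i + 1)) :=
    (hσ _ _).2 ((adj_iff (by omega)).2 (.inl (by ring)))
  rw [adj_iff (by omega)] at hadj
  refine hadj.imp_right fun h => h.resolve_right fun hrung => ?_
  -- `σ⁻¹` would carry the two 4-cycles through the rung `{σ i, σ (i + 1)}` to two 4-cycles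
  -- through the cycle edge `{i, i + 1}`, which lies on only one.
  have pull (c : ZMod (2 * n)) (hc : (mobiusLadder n).ThreePathVia (σ i) (σ (i + 1)) c) :
      σ⁻¹ c = i + n := by
    have hpull := hc.map ⟨(σ⁻¹).toEmbedding, (mobiusLadder n).autSubgroup.inv_mem hσ _ _⟩
    simp only [RelEmbedding.coe_mk, Equiv.coe_toEmbedding, Equiv.Perm.inv_def,
      Equiv.symm_apply_apply] at hpull
    exact threePathVia_add_one hn hpull
  obtain ⟨hplus, hminus⟩ := threePathVia_of_sub_eq (by omega) hrung
  have hsame := σ⁻¹.injective ((pull _ hplus).trans (pull _ hminus).symm)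
  exact two_ne_zero_of_lt (m := 2 * n) (by omega) (by linear_combination hsame)

theorem autSubgroup_eq_range_toPerm (hn : 4 ≤ n) :
    (mobiusLadder n).autSubgroup = (DihedralGroup.toPerm (2 * n)).range := by
  refine le_antisymm (fun σ hσ => ?_) (by rintro _ ⟨g, rfl⟩; exact toPerm_mem_autSubgroup g)
  rcases eq_add_or_eq_sub_of_injective (two_ne_zero_of_lt (by omega)) σ.injective
    (sub_eq_one_or_neg_one_of_mem_autSubgroup hn hσ) with h | h
  · exact ⟨.r (-σ 0), Equiv.ext fun x => by simp [h x, add_comm]⟩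
  · exact ⟨.sr (σ 0), Equiv.ext fun x => (h x).symm⟩

end mobiusLadder

/-- For `n ≥ 4`, the automorphism group of the Möbius ladder `Mₙ` is isomorphic
to the dihedral group of order `4n`. -/
theorem mobiusLadder_autGroup_iso_dihedral (n : ℕ) (hn : 4 ≤ n) :
    Nonempty (↥((mobiusLadder n).autSubgroup) ≃* DihedralGroup (2 * n)) :=
  ⟨(MulEquiv.subgroupCongr (mobiusLadder.autSubgroup_eq_range_toPerm hn)).trans
    (MonoidHom.ofInjective (DihedralGroup.toPerm_injective
      (ZMod.two_ne_zero_of_lt (by omega)))).symm⟩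
end
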